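/- arXiv:1906.06126 — 2 statements merged into one kernel-verified Lean document; each statement's English description precedes it below -/
import Mathlib

section
/- Fix α > 0 and let 1/z_n = 1 + α (constant fugacity below critical). Then E_{n,z_n}(L_n) → 1/α and var_{n,z_n}(L_n) → (1+α)/α² as n → ∞; moreover L_n + 1 converges in distribution to a geometric random variable with mean 1 + 1/α, i.e. for each integer k ≥ 1, P_{n,z_n}(L_n + 1 = k) → (α/(1+α))·(1+α)^{-(k-1)}. -/
open Filter Finset Real

/-- Number of `k`-step SAWs weight: `(z/n)^k` times the number of walks. -/
noncomputable def sawWeight (n : ℕ) (z : ℝ) (k : ℕ) : ℝ :=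
  (z / n) ^ k * ((n - 1).descFactorial k)

/-- Partition function of the variable-length SAW model on `K_n`. -/
noncomputable def sawZ (n : ℕ) (z : ℝ) : ℝ := ∑ k ∈ Finset.range n, sawWeight n z k

/-- Probability that the walk length equals `k`. -/
noncomputable def sawProb (n : ℕ) (z : ℝ) (k : ℕ) : ℝ := sawWeight n z k / sawZ n z

/-- Mean walk length. -/
noncomputable def sawMean (n : ℕ) (z : ℝ) : ℝ := ∑ k ∈ Finset.range n, (k : ℝ) * sawProb n z k

/-- Variance of the walk length. -/
noncomputable def sawVar (n : ℕ) (z : ℝ) : ℝ :=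
  (∑ k ∈ Finset.range n, (k : ℝ) ^ 2 * sawProb n z k) - (sawMean n z) ^ 2

/-- Tail distribution `P(L_n > x)` for real `x`. -/
noncomputable def sawTail (n : ℕ) (z : ℝ) (x : ℝ) : ℝ :=
  ∑ k ∈ Finset.range n, if x < (k : ℝ) then sawProb n z k else 0

/-- Regularised incomplete gamma function at integer first argument,
    `Q(n, ν) = e^{-ν} ∑_{j<n} ν^j/j!`. -/
noncomputable def Qreg (n : ℕ) (ν : ℝ) : ℝ :=
  Real.exp (-ν) * ∑ j ∈ Finset.range n, ν ^ j / (Nat.factorial j)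

/-- `H_n(ν) = Γ(n) Q(n,ν) / (ν^n e^{-ν})`. -/
noncomputable def Hfun (n : ℕ) (ν : ℝ) : ℝ :=
  Real.Gamma n * Qreg n ν / (ν ^ n * Real.exp (-ν))

/-- Standard normal density. -/
noncomputable def normpdf (x : ℝ) : ℝ := Real.exp (-x ^ 2 / 2) / Real.sqrt (2 * Real.pi)

/-- Standard normal tail distribution `Φ̄`. -/
noncomputable def normTail (x : ℝ) : ℝ := ∫ t in Set.Ioi x, normpdf t

/-- `η(λ) = sgn(λ-1) √(2(λ-1-log λ))`. -/
noncomputable def etaF (l : ℝ) : ℝ := Real.sign (l - 1) * Real.sqrt (2 * (l - 1 - Real.log l))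

/-- `Γ*(n) = √(n/(2π)) e^n n^{-n} Γ(n)`. -/
noncomputable def gammaStar (n : ℕ) : ℝ :=
  Real.sqrt (n / (2 * Real.pi)) * Real.exp n * ((n : ℝ) ^ n)⁻¹ * Real.Gamma n

/-- The operator `(ν d/dν)^l`. -/
noncomputable def thetaOp : ℕ → (ℝ → ℝ) → (ℝ → ℝ)
  | 0, f => f
  | (l + 1), f => fun ν => ν * deriv (thetaOp l f) ν

/-! Since `(n - 1)(n - 2)⋯(n - k) ≤ n ^ k`, the weight of the `k`-step walks is at most `z ^ k`,
and it tends to `z ^ k` as `n → ∞`. For `z < 1` dominated convergence therefore turns each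
moment of `L_n` into the corresponding moment of the law `P(L = k) = (1 - z) z ^ k`, i.e. of a
geometric variable minus one; `z = 1 / (1 + α)` gives the stated values. -/

open Topology

theorem hasSum_sq_mul_geometric_of_norm_lt_one {𝕜 : Type*} [NormedField 𝕜] {r : 𝕜}
    (hr : ‖r‖ < 1) :
    HasSum (fun k : ℕ => (k : 𝕜) ^ 2 * r ^ k) (r * (1 + r) / (1 - r) ^ 3) := by
  have hr1 : 1 - r ≠ 0 := sub_ne_zero.2 (ne_of_apply_ne norm (by simpa using hr.ne'))
  have h := (((hasSum_choose_mul_geometric_of_norm_lt_one 2 hr).mul_left 2).sub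
    ((hasSum_coe_mul_geometric_of_norm_lt_one hr).mul_left 3)).sub
    ((hasSum_geometric_of_norm_lt_one hr).mul_left 2)
  rw [show r * (1 + r) / (1 - r) ^ 3
      = 2 * (1 / (1 - r) ^ (2 + 1)) - 3 * (r / (1 - r) ^ 2) - 2 * (1 - r)⁻¹ by field_simp; ring]
  refine h.congr_fun fun k => ?_
  have hchoose : ((k + 2).choose 2 : 𝕜) * 2 = (k + 2) * (k + 1) := by
    have h : (k + 2).choose 2 * 2 = (k + 2) * (k + 1) := by
      simpa using (Nat.add_one_mul_choose_eq (k + 1) 1).symm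
    simpa using congrArg (Nat.cast : ℕ → 𝕜) h
  linear_combination -(r ^ k) * hchoose

section Weights

variable {n : ℕ} {z : ℝ}

theorem sawWeight_eq_mul_descFactorial_div_pow (hn : n ≠ 0) (z : ℝ) (k : ℕ) :
    sawWeight n z k = z ^ k * ((n.descFactorial (k + 1) : ℝ) / (n : ℝ) ^ (k + 1)) := by
  obtain ⟨m, rfl⟩ := Nat.exists_eq_add_one_of_ne_zero hn
  rw [sawWeight, Nat.succ_descFactorial_succ, Nat.add_sub_cancel, div_pow]
  push_cast
  field_simp
  ring

theorem sawWeight_nonneg (hz : 0 ≤ z) (n k : ℕ) : 0 ≤ sawWeight n z k := by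
  unfold sawWeight
  positivity

theorem sawWeight_le_pow (hn : n ≠ 0) (hz : 0 ≤ z) (k : ℕ) : sawWeight n z k ≤ z ^ k := by
  rw [sawWeight_eq_mul_descFactorial_div_pow hn]
  refine mul_le_of_le_one_right (pow_nonneg hz k) (div_le_one_of_le₀ ?_ (by positivity))
  exact_mod_cast Nat.descFactorial_le_pow n (k + 1)

theorem sawWeight_eq_zero_of_le {k : ℕ} (hn : n ≠ 0) (hk : n ≤ k) : sawWeight n z k = 0 := by
  rw [sawWeight_eq_mul_descFactorial_div_pow hn,
    Nat.descFactorial_eq_zero_iff_lt.2 (Nat.lt_succ_of_le hk)]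
  simp

theorem tendsto_sawWeight (z : ℝ) (k : ℕ) :
    Tendsto (fun n : ℕ => sawWeight n z k) atTop (𝓝 (z ^ k)) := by
  have hpos : ∀ᶠ n : ℕ in atTop, n ≠ 0 := eventually_ne_atTop 0
  have hratio := (Asymptotics.isEquivalent_iff_tendsto_one
    (hpos.mono fun n hn => by positivity)).1 (isEquivalent_descFactorial (k + 1))
  simpa using (hratio.const_mul (z ^ k)).congr' <|
    hpos.mono fun n hn => (sawWeight_eq_mul_descFactorial_div_pow hn z k).symm

end Weights

section Limits

variable {z : ℝ}

theorem sum_range_mul_sawWeight_eq_tsum {n : ℕ} (hn : n ≠ 0) (c : ℕ → ℝ) :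
    ∑ k ∈ range n, c k * sawWeight n z k = ∑' k, c k * sawWeight n z k :=
  (tsum_eq_sum fun k hk => by
    rw [sawWeight_eq_zero_of_le hn (not_lt.1 (mem_range.not.1 hk)), mul_zero]).symm

theorem tendsto_sum_range_mul_sawWeight (hz : 0 ≤ z) {c : ℕ → ℝ} (hc : ∀ k, 0 ≤ c k)
    {S : ℝ} (hS : HasSum (fun k => c k * z ^ k) S) :
    Tendsto (fun n : ℕ => ∑ k ∈ range n, c k * sawWeight n z k) atTop (𝓝 S) := by
  have hlim := tendsto_tsum_of_dominated_convergence (f := fun n k => c k * sawWeight n z k)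
    hS.summable (fun k => (tendsto_sawWeight z k).const_mul (c k)) <|
    (eventually_ne_atTop 0).mono fun n hn k => by
      rw [Real.norm_of_nonneg (mul_nonneg (hc k) (sawWeight_nonneg hz n k))]
      exact mul_le_mul_of_nonneg_left (sawWeight_le_pow hn hz k) (hc k)
  rw [hS.tsum_eq] at hlim
  exact hlim.congr' <| (eventually_ne_atTop 0).mono fun n hn =>
    (sum_range_mul_sawWeight_eq_tsum hn c).symm

theorem tendsto_sawZ (hz₀ : 0 ≤ z) (hz₁ : z < 1) :
    Tendsto (fun n : ℕ => sawZ n z) atTop (𝓝 (1 - z)⁻¹) := by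
  simpa [sawZ] using
    tendsto_sum_range_mul_sawWeight hz₀ (c := fun _ => 1) (fun _ => zero_le_one)
    (by simpa using hasSum_geometric_of_lt_one hz₀ hz₁)

theorem tendsto_sum_range_mul_sawProb (hz₀ : 0 ≤ z) (hz₁ : z < 1) {c : ℕ → ℝ}
    (hc : ∀ k, 0 ≤ c k) {S : ℝ} (hS : HasSum (fun k => c k * z ^ k) S) :
    Tendsto (fun n : ℕ => ∑ k ∈ range n, c k * sawProb n z k) atTop (𝓝 (S * (1 - z))) := by
  have hz : (1 - z)⁻¹ ≠ 0 := inv_ne_zero (sub_ne_zero.2 hz₁.ne')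
  have h := (tendsto_sum_range_mul_sawWeight hz₀ hc hS).div (tendsto_sawZ hz₀ hz₁) hz
  rw [div_inv_eq_mul] at h
  exact h.congr fun n => by simp only [Pi.div_apply, sawProb, Finset.sum_div, mul_div_assoc]

theorem tendsto_sawProb (hz₀ : 0 ≤ z) (hz₁ : z < 1) (k : ℕ) :
    Tendsto (fun n : ℕ => sawProb n z k) atTop (𝓝 (z ^ k * (1 - z))) := by
  have hz : (1 - z)⁻¹ ≠ 0 := inv_ne_zero (sub_ne_zero.2 hz₁.ne')
  have h := (tendsto_sawWeight z k).div (tendsto_sawZ hz₀ hz₁) hz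
  rwa [div_inv_eq_mul] at h

theorem tendsto_sawMean (hz₀ : 0 ≤ z) (hz₁ : z < 1) :
    Tendsto (fun n : ℕ => sawMean n z) atTop (𝓝 (z / (1 - z))) := by
  have h := tendsto_sum_range_mul_sawProb hz₀ hz₁ (fun k => Nat.cast_nonneg k)
    (hasSum_coe_mul_geometric_of_norm_lt_one (by rwa [Real.norm_of_nonneg hz₀]))
  rwa [show z / (1 - z) ^ 2 * (1 - z) = z / (1 - z) by field_simp [sub_ne_zero.2 hz₁.ne']] at h

theorem tendsto_sawVar (hz₀ : 0 ≤ z) (hz₁ : z < 1) :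
    Tendsto (fun n : ℕ => sawVar n z) atTop (𝓝 (z / (1 - z) ^ 2)) := by
  have h := (tendsto_sum_range_mul_sawProb hz₀ hz₁ (fun k => sq_nonneg (k : ℝ))
    (hasSum_sq_mul_geometric_of_norm_lt_one (by rwa [Real.norm_of_nonneg hz₀]))).sub
    ((tendsto_sawMean hz₀ hz₁).pow 2)
  rwa [show z * (1 + z) / (1 - z) ^ 3 * (1 - z) - (z / (1 - z)) ^ 2 = z / (1 - z) ^ 2 by
    field_simp [sub_ne_zero.2 hz₁.ne']; ring] at h

end Limits

theorem high_temp_limits (α : ℝ) (hα : 0 < α) :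
    Tendsto (fun n : ℕ => sawMean n (1 / (1 + α))) atTop (nhds (1 / α))
      ∧ Tendsto (fun n : ℕ => sawVar n (1 / (1 + α))) atTop (nhds ((1 + α) / α ^ 2))
      ∧ ∀ k : ℕ, 1 ≤ k →
          Tendsto (fun n : ℕ => sawProb n (1 / (1 + α)) (k - 1)) atTop
            (nhds ((α / (1 + α)) * ((1 + α) ^ (k - 1))⁻¹)) := by
  have hz₀ : 0 ≤ 1 / (1 + α) := by positivity
  have hz₁ : 1 / (1 + α) < 1 := by rw [div_lt_one (by positivity)]; linarith
  have hgap : 1 - 1 / (1 + α) = α / (1 + α) := by field_simp; ring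
  refine ⟨?_, ?_, fun k _ => ?_⟩
  · convert tendsto_sawMean hz₀ hz₁ using 2
    rw [hgap]
    field_simp
  · convert tendsto_sawVar hz₀ hz₁ using 2
    rw [hgap]
    field_simp
  · convert tendsto_sawProb hz₀ hz₁ (k - 1) using 2
    rw [hgap, one_div_pow, one_div]
    ring
end

section
/- At the critical fugacity z_n = 1, the rescaled walk length L_n/√n converges in distribution to a standard half-normal random variable: for every y ≥ 0, P_{n,1}(L_n > y√n) → Φ̄(y)/Φ̄(0) = 2Φ̄(y), where Φ̄ is the standard normal tail. -/
open Filter Finset Real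

/-! At `z = 1` the weight of a `k`-step walk is `w_n(k) = ∏_{i<k} (1 - (i + 1)/n)`, which lies
between `exp (-k(k+1)/(2(n-k)))` and `exp (-k(k+1)/(2n))`. Hence `w_n ⌊t√n⌋ → exp (-t²/2)`, under
a Gaussian majorant uniform in `n`. Since `(1/√n) ∑_k w_n(k)` is the integral over `(0, ∞)` of the
step function `t ↦ w_n ⌊t√n⌋`, dominated convergence sends the numerator and the partition
function of `P(L_n > y√n)`, both rescaled by `1/√n`, to `∫_y^∞ e^{-t²/2}` and `∫_0^∞ e^{-t²/2}`. -/

open MeasureTheory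

theorem exp_neg_div_sub_le_one_sub_div {b c : ℝ} (hc : 0 ≤ c) (hcb : c < b) :
    exp (-(c / (b - c))) ≤ 1 - c / b := by
  have hb : 0 < b := hc.trans_lt hcb
  have hpos : 0 < 1 - c / b := by rw [sub_pos, div_lt_one hb]; exact hcb
  calc exp (-(c / (b - c))) = exp (1 - (1 - c / b)⁻¹) := by
        have : b - c ≠ 0 := by linarith
        congr 1; field_simp; ring
    _ ≤ exp (log (1 - c / b)) := exp_le_exp.mpr (one_sub_inv_le_log_of_pos hpos)
    _ = 1 - c / b := exp_log hpos

theorem sum_range_natCast_add_one (k : ℕ) : ∑ i ∈ range k, ((i : ℝ) + 1) = k * (k + 1) / 2 := by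
  induction k with
  | zero => simp
  | succ k ih => rw [sum_range_succ, ih]; push_cast; ring

theorem prod_range_exp_neg_natCast_add_one_div (k : ℕ) (d : ℝ) :
    ∏ i ∈ range k, exp (-((i + 1) / d)) = exp (-(k * (k + 1)) / (2 * d)) := by
  rw [← exp_sum, sum_neg_distrib, ← sum_div, sum_range_natCast_add_one]
  ring_nf

theorem sawWeight_eq_zero_of_lt {n k : ℕ} (z : ℝ) (h : n - 1 < k) : sawWeight n z k = 0 := by
  simp [sawWeight, Nat.descFactorial_eq_zero_iff_lt.mpr h]

theorem sawWeight_one_eq_prod (n k : ℕ) :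
    sawWeight n 1 k = ∏ i ∈ range k, ((n - (i + 1) : ℕ) : ℝ) / n := by
  simp_rw [sawWeight, Nat.descFactorial_eq_prod_range, Nat.sub_sub, add_comm 1, prod_div_distrib,
    prod_const, card_range, Nat.cast_prod]
  ring

theorem sawWeight_one_nonneg (n k : ℕ) : 0 ≤ sawWeight n 1 k := by
  rw [sawWeight_one_eq_prod]
  exact prod_nonneg fun i _ => by positivity

theorem sawWeight_one_le_exp (n k : ℕ) : sawWeight n 1 k ≤ exp (-(k * (k + 1)) / (2 * n)) := by
  rw [sawWeight_one_eq_prod, ← prod_range_exp_neg_natCast_add_one_div]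
  refine prod_le_prod (fun i _ => by positivity) fun i _ => ?_
  rcases le_or_gt (i + 1) n with hi | hi
  · have hn : (0 : ℝ) < n := by exact_mod_cast (Nat.succ_pos i).trans_le hi
    rw [Nat.cast_sub hi, sub_div, div_self hn.ne']
    push_cast
    exact one_sub_le_exp_neg _
  · rw [Nat.sub_eq_zero_of_le hi.le]
    simp [(exp_pos _).le]

theorem exp_le_sawWeight_one {n k : ℕ} (hk : k < n) :
    exp (-(k * (k + 1)) / (2 * (n - k))) ≤ sawWeight n 1 k := by
  rw [sawWeight_one_eq_prod, ← prod_range_exp_neg_natCast_add_one_div]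
  refine prod_le_prod (fun i _ => (exp_pos _).le) fun i hi => ?_
  have hik : i + 1 ≤ k := mem_range.mp hi
  have hikR : (i : ℝ) + 1 ≤ k := by exact_mod_cast hik
  have hkn : (k : ℝ) < n := by exact_mod_cast hk
  rw [Nat.cast_sub (hik.trans hk.le), sub_div, div_self (by linarith), Nat.cast_add_one]
  calc exp (-((i + 1) / (n - k))) ≤ exp (-((i + 1) / (n - (i + 1)))) := by
        gcongr
    _ ≤ 1 - (i + 1) / n := exp_neg_div_sub_le_one_sub_div (by positivity) (by linarith)

theorem mem_Ico_div_iff_natFloor_mul_eq {s t : ℝ} (hs : 0 < s) (k : ℕ) :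
    t ∈ Set.Ico (k / s) ((k + 1) / s) ↔ 0 ≤ t ∧ ⌊t * s⌋₊ = k := by
  rw [Set.mem_Ico, div_le_iff₀ hs, lt_div_iff₀ hs]
  constructor
  · rintro ⟨h1, h2⟩
    have ht : 0 ≤ t * s := (Nat.cast_nonneg k).trans h1
    exact ⟨nonneg_of_mul_nonneg_left ht hs, (Nat.floor_eq_iff ht).mpr ⟨h1, h2⟩⟩
  · rintro ⟨ht, rfl⟩
    exact ⟨Nat.floor_le (by positivity), Nat.lt_floor_add_one _⟩

theorem integral_Ioi_natFloor_mul {a : ℕ → ℝ} {N : ℕ} {s : ℝ} (hs : 0 < s)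
    (ha : ∀ k, N ≤ k → a k = 0) :
    ∫ t in Set.Ioi 0, a ⌊t * s⌋₊ = s⁻¹ * ∑ k ∈ range N, a k := by
  have hstep : (Set.Ici 0).indicator (fun t => a ⌊t * s⌋₊)
      = fun t => ∑ k ∈ range N, (Set.Ico (k / s) ((k + 1) / s)).indicator (fun _ => a k) t := by
    ext t
    simp only [Set.indicator_apply, mem_Ico_div_iff_natFloor_mul_eq hs, Set.mem_Ici]
    by_cases ht : 0 ≤ t
    · simp only [ht, true_and, sum_ite_eq, mem_range, ↓reduceIte]
      split_ifs with h
      · rfl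
      · exact ha _ (not_lt.mp h)
    · simp [ht]
  rw [← integral_Ici_eq_integral_Ioi, ← integral_indicator measurableSet_Ici, hstep,
    integral_finsetSum _ fun k _ => (integrableOn_const measure_Ico_lt_top.ne).integrable_indicator
      measurableSet_Ico, mul_sum]
  refine sum_congr rfl fun k _ => ?_
  rw [integral_indicator_const _ measurableSet_Ico,
    Real.volume_real_Ico_of_le (by gcongr; linarith), smul_eq_mul]
  field_simp
  ring

theorem tendsto_inv_mul_sum_of_dominated {a : ℕ → ℕ → ℝ} {N : ℕ → ℕ} {s : ℕ → ℝ} {g G : ℝ → ℝ}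
    (hs : ∀ᶠ n in atTop, 0 < s n) (ha : ∀ᶠ n in atTop, ∀ k, N n ≤ k → a n k = 0)
    (hG : IntegrableOn G (Set.Ioi 0)) (hbound : ∀ᶠ n in atTop, ∀ t > 0, ‖a n ⌊t * s n⌋₊‖ ≤ G t)
    (hlim : ∀ᵐ t, 0 < t → Tendsto (fun n => a n ⌊t * s n⌋₊) atTop (nhds (g t))) :
    Tendsto (fun n => (s n)⁻¹ * ∑ k ∈ range (N n), a n k) atTop
      (nhds (∫ t in Set.Ioi 0, g t)) := by
  have hint : ∀ᶠ n in atTop,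
      ∫ t in Set.Ioi 0, a n ⌊t * s n⌋₊ = (s n)⁻¹ * ∑ k ∈ range (N n), a n k := by
    filter_upwards [hs, ha] with n hsn han using integral_Ioi_natFloor_mul hsn han
  refine (tendsto_integral_filter_of_dominated_convergence G ?_ ?_ hG ?_).congr' hint
  · exact Eventually.of_forall fun n => ((measurable_from_nat (f := a n)).comp
      (measurable_id.mul_const _).nat_floor).aestronglyMeasurable
  · filter_upwards [hbound] with n hn
    exact (ae_restrict_iff' measurableSet_Ioi).mpr (Eventually.of_forall hn)
  · exact (ae_restrict_iff' measurableSet_Ioi).mpr hlim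

theorem tendsto_sqrt_natCast_atTop : Tendsto (fun n : ℕ => √(n : ℝ)) atTop atTop :=
  tendsto_sqrt_atTop.comp tendsto_natCast_atTop_atTop

theorem tendsto_natFloor_mul_sqrt_div_sqrt {t : ℝ} (ht : 0 ≤ t) :
    Tendsto (fun n : ℕ => (⌊t * √(n : ℝ)⌋₊ : ℝ) / √(n : ℝ)) atTop (nhds t) :=
  (tendsto_nat_floor_mul_div_atTop ht).comp tendsto_sqrt_natCast_atTop

theorem tendsto_sawWeight_one_natFloor_mul_sqrt {t : ℝ} (ht : 0 ≤ t) :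
    Tendsto (fun n : ℕ => sawWeight n 1 ⌊t * √(n : ℝ)⌋₊) atTop (nhds (exp (-t ^ 2 / 2))) := by
  set k : ℕ → ℕ := fun n => ⌊t * √(n : ℝ)⌋₊
  set r : ℕ → ℝ := fun n => k n / √(n : ℝ)
  set e : ℕ → ℝ := fun n => (√(n : ℝ))⁻¹
  -- in terms of `r` and `e` both exponential bounds on the weight are continuous expressions
  have hr : Tendsto r atTop (nhds t) := tendsto_natFloor_mul_sqrt_div_sqrt ht
  have he : Tendsto e atTop (nhds 0) := tendsto_inv_atTop_zero.comp tendsto_sqrt_natCast_atTop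
  have hupper : Tendsto (fun n => exp (-(r n * (r n + e n)) / 2)) atTop
      (nhds (exp (-t ^ 2 / 2))) := by
    have := ((hr.mul (hr.add he)).neg.div_const 2).rexp
    simpa [sq] using this
  have hlower : Tendsto (fun n => exp (-(r n * (r n + e n)) / (2 * (1 - r n * e n)))) atTop
      (nhds (exp (-t ^ 2 / 2))) := by
    have := ((hr.mul (hr.add he)).neg.div ((hr.mul he).const_sub 1 |>.const_mul 2)
      (by norm_num)).rexp
    simpa [sq] using this
  have hev : ∀ᶠ n : ℕ in atTop, 0 < √(n : ℝ) ∧ t < √(n : ℝ) :=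
    (tendsto_sqrt_natCast_atTop.eventually_gt_atTop 0).and
      (tendsto_sqrt_natCast_atTop.eventually_gt_atTop t)
  refine tendsto_of_tendsto_of_tendsto_of_le_of_le' hlower hupper ?_ ?_
  · filter_upwards [hev] with n ⟨hs, hts⟩
    have hsq : √(n : ℝ) ^ 2 = n := sq_sqrt (Nat.cast_nonneg n)
    have hkn : (k n : ℝ) < n := by
      calc (k n : ℝ) ≤ t * √(n : ℝ) := Nat.floor_le (by positivity)
        _ < √(n : ℝ) * √(n : ℝ) := by gcongr
        _ = n := mul_self_sqrt (Nat.cast_nonneg n)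
    have hrk : -(r n * (r n + e n)) / (2 * (1 - r n * e n))
        = -(k n * (k n + 1)) / (2 * (n - k n)) := by
      simp only [r, e]
      field_simp
      rw [hsq]
    rw [hrk]
    exact exp_le_sawWeight_one (by exact_mod_cast hkn)
  · filter_upwards [hev] with n ⟨hs, _⟩
    have hsq : √(n : ℝ) ^ 2 = n := sq_sqrt (Nat.cast_nonneg n)
    have hrk : -(r n * (r n + e n)) / 2 = -(k n * (k n + 1)) / (2 * n) := by
      simp only [r, e]
      field_simp
      rw [hsq, mul_div_cancel_right₀ _ (hsq ▸ (pow_pos hs 2).ne')]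
    rw [hrk]
    exact sawWeight_one_le_exp n (k n)

theorem sawWeight_one_natFloor_mul_sqrt_le {n : ℕ} (hn : n ≠ 0) {t : ℝ} (ht : 0 ≤ t) :
    sawWeight n 1 ⌊t * √(n : ℝ)⌋₊ ≤ exp (1 - t ^ 2 / 4) := by
  set k := ⌊t * √(n : ℝ)⌋₊
  have hn1 : (1 : ℝ) ≤ n := by exact_mod_cast Nat.one_le_iff_ne_zero.mpr hn
  have hu : (t * √(n : ℝ)) ^ 2 = t ^ 2 * n := by rw [mul_pow, sq_sqrt (Nat.cast_nonneg n)]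
  have hu0 : 0 ≤ t * √(n : ℝ) := by positivity
  have hk : t * √(n : ℝ) < k + 1 := Nat.lt_floor_add_one _
  have hkk : (t * √(n : ℝ)) ^ 2 - t * √(n : ℝ) ≤ k * (k + 1) := by
    nlinarith [(Nat.cast_nonneg k : (0 : ℝ) ≤ k)]
  refine (sawWeight_one_le_exp n k).trans (exp_le_exp.mpr ?_)
  rw [div_le_iff₀ (by positivity)]
  nlinarith [sq_nonneg (t * √(n : ℝ) - 1)]

theorem integrableOn_exp_one_sub_sq_div_four :
    IntegrableOn (fun t : ℝ => exp (1 - t ^ 2 / 4)) (Set.Ioi 0) := by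
  have h : (fun t : ℝ => exp (1 - t ^ 2 / 4)) = fun t => exp 1 * exp (-(1 / 4) * t ^ 2) := by
    ext t; rw [← exp_add]; ring_nf
  rw [h]
  exact ((integrable_exp_neg_mul_sq (by norm_num)).const_mul _).integrableOn

theorem eventually_sawWeight_one_eq_zero :
    ∀ᶠ n : ℕ in atTop, ∀ k, n ≤ k → sawWeight n 1 k = 0 := by
  filter_upwards [eventually_ne_atTop 0] with n hn k hk
  exact sawWeight_eq_zero_of_lt 1 (by omega)

theorem tendsto_inv_sqrt_mul_sawZ_one :
    Tendsto (fun n : ℕ => (√(n : ℝ))⁻¹ * sawZ n 1) atTop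
      (nhds (∫ t in Set.Ioi 0, exp (-t ^ 2 / 2))) :=
  tendsto_inv_mul_sum_of_dominated (N := id) (tendsto_sqrt_natCast_atTop.eventually_gt_atTop 0)
    eventually_sawWeight_one_eq_zero integrableOn_exp_one_sub_sq_div_four
    (by
      filter_upwards [eventually_ne_atTop 0] with n hn t ht
      rw [norm_of_nonneg (sawWeight_one_nonneg _ _)]
      exact sawWeight_one_natFloor_mul_sqrt_le hn ht.le)
    (ae_of_all _ fun _ ht => tendsto_sawWeight_one_natFloor_mul_sqrt ht.le)

theorem tendsto_ite_sawWeight_one_natFloor_mul_sqrt {y t : ℝ} (ht : 0 < t) (hty : t ≠ y) :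
    Tendsto (fun n : ℕ =>
        if y * √(n : ℝ) < ⌊t * √(n : ℝ)⌋₊ then sawWeight n 1 ⌊t * √(n : ℝ)⌋₊ else 0)
      atTop (nhds ((Set.Ioi y).indicator (fun t => exp (-t ^ 2 / 2)) t)) := by
  rcases hty.lt_or_gt with hty | hty
  · rw [Set.indicator_of_notMem (show t ∉ Set.Ioi y from not_lt.mpr hty.le)]
    refine tendsto_const_nhds.congr fun n => (if_neg (not_lt.mpr ?_)).symm
    calc (⌊t * √(n : ℝ)⌋₊ : ℝ) ≤ t * √(n : ℝ) := Nat.floor_le (by positivity)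
      _ ≤ y * √(n : ℝ) := by gcongr
  · rw [Set.indicator_of_mem (show t ∈ Set.Ioi y from hty)]
    refine (tendsto_sawWeight_one_natFloor_mul_sqrt ht.le).congr' ?_
    filter_upwards [(tendsto_natFloor_mul_sqrt_div_sqrt ht.le).eventually (lt_mem_nhds hty),
      tendsto_sqrt_natCast_atTop.eventually_gt_atTop 0] with n hn hs
    rw [if_pos ((lt_div_iff₀ hs).mp hn)]

theorem tendsto_inv_sqrt_mul_sum_ite_sawWeight_one {y : ℝ} (hy : 0 ≤ y) :
    Tendsto (fun n : ℕ => (√(n : ℝ))⁻¹ *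
        ∑ k ∈ range n, if y * √(n : ℝ) < k then sawWeight n 1 k else 0) atTop
      (nhds (∫ t in Set.Ioi y, exp (-t ^ 2 / 2))) := by
  have h := tendsto_inv_mul_sum_of_dominated (N := id)
    (a := fun n k => if y * √(n : ℝ) < k then sawWeight n 1 k else 0)
    (tendsto_sqrt_natCast_atTop.eventually_gt_atTop 0)
    (by
      filter_upwards [eventually_sawWeight_one_eq_zero] with n hn k hk
      simp [hn k hk])
    integrableOn_exp_one_sub_sq_div_four
    (by
      filter_upwards [eventually_ne_atTop 0] with n hn t ht
      refine le_trans ?_ (sawWeight_one_natFloor_mul_sqrt_le hn ht.le)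
      split_ifs
      · exact (norm_of_nonneg (sawWeight_one_nonneg _ _)).le
      · simpa using sawWeight_one_nonneg _ _)
    (by
      filter_upwards [Measure.ae_ne volume y] with t hty ht
      exact tendsto_ite_sawWeight_one_natFloor_mul_sqrt ht hty)
  rwa [setIntegral_indicator measurableSet_Ioi, Set.Ioi_inter_Ioi, max_eq_right hy] at h

theorem sawTail_eq_sum_div (n : ℕ) (z x : ℝ) :
    sawTail n z x = (∑ k ∈ range n, if x < k then sawWeight n z k else 0) / sawZ n z := by
  rw [sawTail, sum_div]
  refine sum_congr rfl fun k _ => ?_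
  split_ifs <;> simp [sawProb]

theorem integral_Ioi_exp_neg_sq_div_two :
    ∫ t in Set.Ioi (0 : ℝ), exp (-t ^ 2 / 2) = √(2 * π) / 2 := by
  have h := integral_gaussian_Ioi (1 / 2)
  rw [show π / (1 / 2) = 2 * π by ring] at h
  rw [← h]
  congr with t
  ring_nf

theorem normTail_eq_integral_div (y : ℝ) :
    normTail y = (∫ t in Set.Ioi y, exp (-t ^ 2 / 2)) / √(2 * π) :=
  integral_div _ _

theorem critical_half_normal (y : ℝ) (hy : 0 ≤ y) :
    Tendsto (fun n : ℕ => sawTail n 1 (y * Real.sqrt n)) atTop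
      (nhds (2 * normTail y)) := by
  have hZ : (∫ t in Set.Ioi (0 : ℝ), exp (-t ^ 2 / 2)) ≠ 0 := by
    rw [integral_Ioi_exp_neg_sq_div_two]; positivity
  have h := (tendsto_inv_sqrt_mul_sum_ite_sawWeight_one hy).div tendsto_inv_sqrt_mul_sawZ_one hZ
  have hval : (∫ t in Set.Ioi y, exp (-t ^ 2 / 2)) / (√(2 * π) / 2) = 2 * normTail y := by
    rw [normTail_eq_integral_div]
    field_simp
  rw [integral_Ioi_exp_neg_sq_div_two, hval] at h
  refine h.congr' ?_
  filter_upwards [eventually_ne_atTop 0] with n hn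
  rw [Pi.div_apply, sawTail_eq_sum_div, mul_div_mul_left _ _ (by positivity)]
end
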